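/- arXiv:0908.4519 — 2 statements merged into one kernel-verified Lean document; each statement's English description precedes it below -/
import Mathlib

section
/- Let F be a field, m ≥ 1 an integer, and S an upper triangular matrix as below. Let F_k ∈ 𝔉(S,m), k = 1,2,…, be any sequence of polynomial systems and let F_i^{(k)} be the iterated polynomials. Then for every i = 0,…,m and every k ≥ 1 one can write F_i^{(k)} = X_i·G̃_{k,i}(X_{i+1},…,X_m) + H̃_{k,i}(X_{i+1},…,X_m) with G̃_{k,i}, H̃_{k,i} ∈ F[X_{i+1},…,X_m]; moreover deg G̃_{k,m} = 0, and for each i = 0,…,m−1 there exists a polynomial ψ_i ∈ ℚ[T] with deg ψ_i < m−i such that deg G̃_{k,i} = (1/(m−i)!)·k^{m−i}·s_{i,i+1}·s_{i+1,i+2}⋯s_{m−1,m} + ψ_i(k) for all k ≥ 1. -/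
open MvPolynomial

/-- Membership of a polynomial system `F = (F_0, …, F_m)` over `R` in the class `𝔉(S,m)`,
where `s i j` records the entries of the upper triangular matrix `S` (for `i < j`). -/
def IsFSystem {R : Type*} [CommRing R] (m : ℕ) (s : ℕ → ℕ → ℕ)
    (F : Fin (m + 1) → MvPolynomial (Fin (m + 1)) R) : Prop :=
  (∃ g h : R, g ≠ 0 ∧
      F (Fin.last m) = MvPolynomial.C g * MvPolynomial.X (Fin.last m) + MvPolynomial.C h) ∧
  ∀ i : Fin (m + 1), (i : ℕ) < m →
    ∃ (G H Gt : MvPolynomial (Fin (m + 1)) R) (g : R),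
      g ≠ 0 ∧
      F i = MvPolynomial.X i * G + H ∧
      (∀ d ∈ G.support, ∀ j : Fin (m + 1), j ≤ i → d j = 0) ∧
      (∀ d ∈ H.support, ∀ j : Fin (m + 1), j ≤ i → d j = 0) ∧
      G = MvPolynomial.C g *
          (∏ j ∈ Finset.univ.filter (fun j : Fin (m + 1) => i < j),
            MvPolynomial.X j ^ s i.val j.val) + Gt ∧
      (∀ d ∈ Gt.support, ∀ j : Fin (m + 1), i < j → d j < s i.val j.val) ∧
      (∀ d ∈ H.support, ∀ j : Fin (m + 1), i < j → d j ≤ s i.val j.val)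

/-- The iterated polynomials `F_i^{(k)}` of a sequence of polynomial systems:
`F_i^{(0)} = X_i` and `F_i^{(k)} = F_{k,i}(F_0^{(k-1)}, …, F_m^{(k-1)})`. -/
noncomputable def iterSys {R : Type*} [CommRing R] (m : ℕ)
    (Fs : ℕ → Fin (m + 1) → MvPolynomial (Fin (m + 1)) R) :
    ℕ → Fin (m + 1) → MvPolynomial (Fin (m + 1)) R
  | 0 => fun i => MvPolynomial.X i
  | k + 1 => fun i => MvPolynomial.bind₁ (iterSys m Fs k) (Fs (k + 1) i)

/-- The additive character `e_p(z) = exp(2πiz/p)` evaluated at an element of `F_p`. -/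
noncomputable def eP (p : ℕ) (x : ZMod p) : ℂ :=
  Complex.exp (2 * Real.pi * Complex.I * (x.val : ℂ) / (p : ℂ))

/-- `e_M(z) = exp(2πiz/M)` for a natural number `z`. -/
noncomputable def eM (M z : ℕ) : ℂ :=
  Complex.exp (2 * Real.pi * Complex.I * (z : ℂ) / (M : ℂ))

/-- The discrepancy of the first `N` points of a sequence in `[0,1)^s`: the supremum over
boxes `B = [a_1,b_1) × ⋯ × [a_s,b_s) ⊆ [0,1)^s` of `|T(B)/N - vol B|`. -/
noncomputable def discrepancy (s N : ℕ) (P : ℕ → Fin s → ℝ) : ℝ :=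
  sSup {D : ℝ | ∃ a b : Fin s → ℝ,
    (∀ j, 0 ≤ a j ∧ a j ≤ b j ∧ b j ≤ 1) ∧
    D = |(((Finset.range N).filter fun n => ∀ j, a j ≤ P n j ∧ P n j < b j).card : ℝ) / N -
        ∏ j, (b j - a j)|}

namespace NW
set_option linter.unusedSectionVars false

variable {R : Type*} [CommRing R] [IsDomain R] {σ : Type*}

lemma exists_deg (p : MvPolynomial σ R) (hp : p ≠ 0) :
    ∃ d ∈ p.support, (d.sum fun _ e => e) = p.totalDegree := by
  obtain ⟨d, hd, h⟩ := Finset.exists_mem_eq_sup p.support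
    (MvPolynomial.support_nonempty.2 hp) (fun d => d.sum fun _ e => e)
  exact ⟨d, hd, h.symm⟩

lemma dsum_eq_degree (d : σ →₀ ℕ) : (d.sum fun _ e => e) = d.degree := rfl

lemma hc_ne_zero {p : MvPolynomial σ R} (hp : p ≠ 0) :
    homogeneousComponent p.totalDegree p ≠ 0 := by
  obtain ⟨d, hd, h⟩ := exists_deg p hp
  intro h0
  have := coeff_homogeneousComponent (σ := σ) p.totalDegree p d
  rw [h0, ← dsum_eq_degree, h, if_pos rfl] at this
  exact (MvPolynomial.mem_support_iff.1 hd) this.symm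

lemma hc_mul [DecidableEq σ] {p q : MvPolynomial σ R} {a b : ℕ}
    (hpa : p.totalDegree ≤ a) (hqb : q.totalDegree ≤ b) :
    homogeneousComponent (a + b) (p * q) =
      homogeneousComponent a p * homogeneousComponent b q := by
  apply MvPolynomial.ext
  intro d
  rw [coeff_homogeneousComponent, coeff_mul, coeff_mul]
  have key : ∀ x ∈ Finset.HasAntidiagonal.antidiagonal d,
      coeff x.1 (homogeneousComponent a p) * coeff x.2 (homogeneousComponent b q) =
      if d.degree = a + b then coeff x.1 p * coeff x.2 q else 0 := by
    rintro ⟨u, v⟩ hx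
    have huv : u + v = d := Finset.HasAntidiagonal.mem_antidiagonal.1 hx
    rw [coeff_homogeneousComponent, coeff_homogeneousComponent]
    by_cases hu : coeff u p = 0
    · simp only [hu, ite_eq_right_iff]
      split_ifs <;> simp
    by_cases hv : coeff v q = 0
    · simp only [hv, mul_zero, ite_eq_right_iff]
      split_ifs <;> simp
    have h1 : (u.sum fun _ e => e) ≤ a :=
      le_trans (le_totalDegree (MvPolynomial.mem_support_iff.2 hu)) hpa
    have h2 : (v.sum fun _ e => e) ≤ b :=
      le_trans (le_totalDegree (MvPolynomial.mem_support_iff.2 hv)) hqb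
    have hd : d.degree = u.degree + v.degree := by
      rw [← huv, ← dsum_eq_degree, ← dsum_eq_degree, ← dsum_eq_degree]
      exact Finsupp.sum_add_index' (fun _ => rfl) (fun _ _ _ => rfl)
    rw [dsum_eq_degree] at h1 h2
    by_cases hdeg : d.degree = a + b
    · have hu' : u.degree = a := by omega
      have hv' : v.degree = b := by omega
      rw [if_pos hu', if_pos hv', if_pos hdeg]
    · rw [if_neg hdeg]
      have : u.degree ≠ a ∨ v.degree ≠ b := by
        by_contra hcon
        push_neg at hcon
        exact hdeg (by omega)
      rcases this with h' | h'
      · rw [if_neg h', zero_mul]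
      · rw [if_neg h', mul_zero]
  rw [Finset.sum_congr rfl key]
  split_ifs with h
  · rfl
  · exact Finset.sum_const_zero.symm

lemma totalDegree_mul_eq {p q : MvPolynomial σ R} (hp : p ≠ 0) (hq : q ≠ 0) :
    (p * q).totalDegree = p.totalDegree + q.totalDegree := by
  classical
  refine le_antisymm (totalDegree_mul p q) ?_
  have h := hc_mul (le_refl p.totalDegree) (le_refl q.totalDegree)
  have hne : homogeneousComponent (p.totalDegree + q.totalDegree) (p * q) ≠ 0 := by
    rw [h]
    exact mul_ne_zero (hc_ne_zero hp) (hc_ne_zero hq)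
  obtain ⟨d, hd⟩ := MvPolynomial.ne_zero_iff.1 hne
  rw [coeff_homogeneousComponent] at hd
  by_cases hdeg : d.degree = p.totalDegree + q.totalDegree
  · rw [if_pos hdeg] at hd
    have := le_totalDegree (p := p * q) (MvPolynomial.mem_support_iff.2 hd)
    rwa [dsum_eq_degree, hdeg] at this
  · rw [if_neg hdeg] at hd
    exact absurd rfl hd

lemma mul_ne_zero' {p q : MvPolynomial σ R} (hp : p ≠ 0) (hq : q ≠ 0) : p * q ≠ 0 :=
  mul_ne_zero hp hq

lemma totalDegree_prod_pow {ι : Type*} (t : Finset ι) (f : ι → MvPolynomial σ R)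
    (e : ι → ℕ) (hf : ∀ j ∈ t, f j ≠ 0) :
    (∏ j ∈ t, f j ^ e j) ≠ 0 ∧
    (∏ j ∈ t, f j ^ e j).totalDegree = ∑ j ∈ t, e j * (f j).totalDegree := by
  classical
  induction t using Finset.induction_on with
  | empty => simp
  | @insert a t ha ih =>
    have hfa : f a ≠ 0 := hf a (Finset.mem_insert_self a t)
    have ih' := ih (fun j hj => hf j (Finset.mem_insert_of_mem hj))
    have hpow : f a ^ e a ≠ 0 := pow_ne_zero _ hfa
    have hpowdeg : (f a ^ e a).totalDegree = e a * (f a).totalDegree := by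
      induction (e a) with
      | zero => simp
      | succ n ihn =>
        rw [pow_succ, totalDegree_mul_eq (pow_ne_zero _ hfa) hfa, ihn]
        ring
    rw [Finset.prod_insert ha, Finset.sum_insert ha]
    exact ⟨mul_ne_zero hpow ih'.1,
      by rw [totalDegree_mul_eq hpow ih'.1, hpowdeg, ih'.2]⟩


section Deg2

variable {R : Type*} [CommRing R] {n : ℕ}

set_option linter.unusedSectionVars false

/-- degree bound for substitution -/
lemma bind_deg_le (f : Fin n → MvPolynomial (Fin n) R) (p : MvPolynomial (Fin n) R)
    (D : Fin n → ℕ) (B : ℕ) (hf : ∀ j, (f j).totalDegree ≤ D j)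
    (hp : ∀ d ∈ p.support, ∑ j, d j * D j ≤ B) :
    (bind₁ f p).totalDegree ≤ B := by
  classical
  conv_lhs => rw [as_sum p]
  rw [map_sum]
  refine le_trans (totalDegree_finset_sum _ _) (Finset.sup_le fun d hd => ?_)
  rw [bind₁_monomial]
  refine le_trans (totalDegree_mul _ _) ?_
  rw [totalDegree_C, zero_add]
  refine le_trans (totalDegree_finset_prod _ _) (le_trans ?_ (hp d hd))
  refine le_trans (Finset.sum_le_sum fun j _ => (totalDegree_pow (f j) (d j)).trans
    (Nat.mul_le_mul_left _ (hf j))) ?_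
  exact Finset.sum_le_sum_of_subset_of_nonneg (Finset.subset_univ _)
    (fun _ _ _ => Nat.zero_le _)

/-- main structural degree lemma: `X i * G + H` -/
lemma deg_X_mul_add [Nontrivial R] {G H : MvPolynomial (Fin n) R} {i : Fin n}
    (hG : G ≠ 0) (hH : ∀ d ∈ H.support, d i = 0)
    (hHdeg : H.totalDegree ≤ 1 + G.totalDegree) :
    (X i * G + H) ≠ 0 ∧ (X i * G + H).totalDegree = 1 + G.totalDegree := by
  classical
  obtain ⟨d0, hd0, hd0deg⟩ := Finset.exists_mem_eq_sup G.support
    (MvPolynomial.support_nonempty.2 hG) (fun d => d.sum fun _ e => e)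
  have hcoeff : coeff (Finsupp.single i 1 + d0) (X i * G + H) = coeff d0 G := by
    rw [MvPolynomial.coeff_add, coeff_X_mul]
    have : coeff (Finsupp.single i 1 + d0) H = 0 := by
      by_contra hc
      have := hH _ (MvPolynomial.mem_support_iff.2 hc) 
      simp [Finsupp.add_apply, Finsupp.single_apply] at this
    rw [this, add_zero]
  have hne : coeff (Finsupp.single i 1 + d0) (X i * G + H) ≠ 0 := by
    rw [hcoeff]; exact MvPolynomial.mem_support_iff.1 hd0
  have htd : G.totalDegree = d0.sum fun _ e => e := hd0deg
  have hsum : ((Finsupp.single i 1 + d0).sum fun _ e => e) = 1 + G.totalDegree := by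
    rw [Finsupp.sum_add_index' (fun _ => rfl) (fun _ _ _ => rfl),
      Finsupp.sum_single_index rfl, htd]
  have hge : 1 + G.totalDegree ≤ (X i * G + H).totalDegree := by
    rw [← hsum]
    exact le_totalDegree (MvPolynomial.mem_support_iff.2 hne)
  have hle : (X i * G + H).totalDegree ≤ 1 + G.totalDegree := by
    refine le_trans (totalDegree_add _ _) (max_le ?_ hHdeg)
    refine le_trans (totalDegree_mul _ _) ?_
    have := totalDegree_X (R := R) i
    omega
  exact ⟨fun h0 => hne (by rw [h0, MvPolynomial.coeff_zero]), le_antisymm hle hge⟩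

lemma add_of_deg_lt {p q : MvPolynomial (Fin n) R} (hp : p ≠ 0)
    (h : q.totalDegree < p.totalDegree ∨ q = 0) :
    p + q ≠ 0 ∧ (p + q).totalDegree = p.totalDegree := by
  rcases h with h | rfl
  · constructor
    · intro h0
      have : q = -p := by linear_combination (norm := module) h0
      rw [this, totalDegree_neg] at h
      exact lt_irrefl _ h
    · exact totalDegree_add_eq_left_of_totalDegree_lt h
  · simpa using hp


end Deg2


/-- Faulhaber polynomial: evaluates at `n` to `∑_{k<n} k^d`. -/
noncomputable def Bpoly (d : ℕ) : Polynomial ℚ :=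
  ∑ i ∈ Finset.range (d + 1),
    Polynomial.C (bernoulli i * ((d + 1).choose i) / (d + 1)) * Polynomial.X ^ (d + 1 - i)

lemma Bpoly_eval (d n : ℕ) :
    (Bpoly d).eval (n : ℚ) = ∑ k ∈ Finset.range n, (k : ℚ) ^ d := by
  rw [sum_range_pow, Bpoly]
  rw [Polynomial.eval_finset_sum]
  refine Finset.sum_congr rfl fun i _ => ?_
  rw [Polynomial.eval_mul, Polynomial.eval_C, Polynomial.eval_pow, Polynomial.eval_X]
  push_cast
  ring

lemma Bpoly_coeff_le (d N : ℕ) (hN : d + 1 < N) : (Bpoly d).coeff N = 0 := by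
  rw [Bpoly, Polynomial.finset_sum_coeff]
  refine Finset.sum_eq_zero fun i hi => ?_
  rw [Polynomial.coeff_C_mul, Polynomial.coeff_X_pow, if_neg (by omega), mul_zero]

lemma Bpoly_natDegree (d : ℕ) : (Bpoly d).natDegree ≤ d + 1 :=
  Polynomial.natDegree_le_iff_coeff_eq_zero.2 fun _ h => Bpoly_coeff_le d _ h

lemma Bpoly_coeff_top (d : ℕ) : (Bpoly d).coeff (d + 1) = 1 / (d + 1) := by
  rw [Bpoly, Polynomial.finset_sum_coeff]
  rw [Finset.sum_eq_single_of_mem 0 (Finset.mem_range.2 (by omega))]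
  · rw [Polynomial.coeff_C_mul, Polynomial.coeff_X_pow, if_pos (by omega)]
    simp
  · intro i hi hne
    rw [Polynomial.coeff_C_mul, Polynomial.coeff_X_pow, if_neg (by
      simp only [Finset.mem_range] at hi; omega), mul_zero]

lemma exists_antideriv (d : ℕ) (p : Polynomial ℚ) (hp : p.natDegree ≤ d) :
    ∃ P : Polynomial ℚ,
      (∀ n : ℕ, P.eval (n : ℚ) = ∑ t ∈ Finset.range n, p.eval (t : ℚ)) ∧
      P.natDegree ≤ d + 1 ∧ P.coeff (d + 1) = p.coeff d / (d + 1) := by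
  refine ⟨∑ i ∈ Finset.range (d + 1), Polynomial.C (p.coeff i) * Bpoly i, ?_, ?_, ?_⟩
  · intro n
    rw [Polynomial.eval_finset_sum]
    have : ∀ i ∈ Finset.range (d + 1),
        (Polynomial.C (p.coeff i) * Bpoly i).eval (n : ℚ) =
        ∑ t ∈ Finset.range n, p.coeff i * (t : ℚ) ^ i := by
      intro i _
      rw [Polynomial.eval_mul, Polynomial.eval_C, Bpoly_eval, Finset.mul_sum]
    rw [Finset.sum_congr rfl this, Finset.sum_comm]
    refine Finset.sum_congr rfl fun t _ => ?_
    exact (Polynomial.eval_eq_sum_range' (by omega) _).symm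
  · refine Polynomial.natDegree_le_iff_coeff_eq_zero.2 fun N hN => ?_
    rw [Polynomial.finset_sum_coeff]
    refine Finset.sum_eq_zero fun i hi => ?_
    simp only [Finset.mem_range] at hi
    rw [Polynomial.coeff_C_mul, Bpoly_coeff_le i N (by omega), mul_zero]
  · rw [Polynomial.finset_sum_coeff]
    rw [Finset.sum_eq_single_of_mem d (Finset.mem_range.2 (by omega))]
    · rw [Polynomial.coeff_C_mul, Bpoly_coeff_top, one_div, div_eq_mul_inv]
    · intro i hi hne
      simp only [Finset.mem_range] at hi
      rw [Polynomial.coeff_C_mul, Bpoly_coeff_le i (d+1) (by omega), mul_zero]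




lemma existsQ (m : ℕ) (s : ℕ → ℕ → ℕ) (a : ℕ → Fin (m+1) → ℕ)
    (ha0 : ∀ i, a 0 i = 0)
    (ha : ∀ k i, a (k+1) i =
      a k i + ∑ j ∈ Finset.univ.filter (fun j : Fin (m+1) => i < j),
        s i.val j.val * (1 + a k j)) :
    ∀ i : Fin (m+1), ∃ Q : Polynomial ℚ,
      (∀ k : ℕ, Q.eval (k:ℚ) = 1 + a k i) ∧ Q.natDegree ≤ m - i.val ∧
      Q.coeff (m - i.val) =
        (∏ t ∈ Finset.Ico (i.val) m, (s t (t+1) : ℚ)) / (Nat.factorial (m - i.val)) := by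
  have hlast : ∀ k (i : Fin (m+1)), i.val = m → a k i = 0 := by
    intro k
    induction k with
    | zero => intro i _; exact ha0 i
    | succ k ih =>
      intro i hi
      have hemp : Finset.univ.filter (fun j : Fin (m+1) => i < j) = ∅ :=
        Finset.filter_false_of_mem (fun j _ => by
          simp only [not_lt, Fin.le_def, hi]
          exact Nat.lt_succ_iff.1 j.isLt)
      rw [ha, ih i hi, hemp, Finset.sum_empty]
      rfl
  have main : ∀ v : ℕ, ∀ i : Fin (m+1), m - i.val ≤ v → ∃ Q : Polynomial ℚ,
      (∀ k : ℕ, Q.eval (k:ℚ) = 1 + a k i) ∧ Q.natDegree ≤ m - i.val ∧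
      Q.coeff (m - i.val) =
        (∏ t ∈ Finset.Ico (i.val) m, (s t (t+1) : ℚ)) / (Nat.factorial (m - i.val)) := by
    intro v
    induction v with
    | zero =>
      intro i hi
      have him : i.val = m := by have := Nat.lt_succ_iff.1 i.isLt; omega
      refine ⟨1, fun k => by rw [hlast k i him]; simp, by simp, ?_⟩
      rw [him]
      simp
    | succ n ih =>
      intro i hi
      by_cases hle : m - i.val ≤ n
      · exact ih i hle
      have him : i.val < m := by omega
      have hmi : m - i.val = n + 1 := by omega
      have hIH : ∀ j : Fin (m+1), i < j → ∃ Qj : Polynomial ℚ,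
          (∀ k : ℕ, Qj.eval (k:ℚ) = 1 + a k j) ∧ Qj.natDegree ≤ m - j.val ∧
          Qj.coeff (m - j.val) =
            (∏ t ∈ Finset.Ico (j.val) m, (s t (t+1) : ℚ)) / (Nat.factorial (m - j.val)) := by
        intro j hj
        refine ih j ?_
        have : i.val < j.val := hj
        omega
      choose Qj hQ1 hQ2 hQ3 using hIH
      have hAex := fun (j : Fin (m+1)) (hj : i < j) =>
        exists_antideriv (m - j.val) (Qj j hj) (hQ2 j hj)
      choose Aj hA1 hA2 hA3 using hAex
      have hmemT : ∀ j ∈ Finset.univ.filter (fun j : Fin (m+1) => i < j), i < j :=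
        fun j hj => (Finset.mem_filter.1 hj).2
      refine ⟨1 + ∑ j ∈ (Finset.univ.filter (fun j : Fin (m+1) => i < j)).attach,
        Polynomial.C (s i.val j.1.val : ℚ) * Aj j.1 (hmemT j.1 j.2), ?_, ?_, ?_⟩
      · intro k
        rw [Polynomial.eval_add, Polynomial.eval_one, Polynomial.eval_finset_sum]
        have step1 : ∀ j ∈ (Finset.univ.filter (fun j : Fin (m+1) => i < j)).attach,
            (Polynomial.C (s i.val j.1.val : ℚ) * Aj j.1 (hmemT j.1 j.2)).eval (k:ℚ) =
            (s i.val j.1.val : ℚ) * ∑ t ∈ Finset.range k, (1 + (a t j.1 : ℚ)) := by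
          intro j _
          rw [Polynomial.eval_mul, Polynomial.eval_C, hA1]
          congr 1
          exact Finset.sum_congr rfl fun t _ => by rw [hQ1]
        rw [Finset.sum_congr rfl step1]
        rw [Finset.sum_attach (Finset.univ.filter (fun j : Fin (m+1) => i < j))
          (fun j => (s i.val j.val : ℚ) * ∑ t ∈ Finset.range k, (1 + (a t j : ℚ)))]
        have swap : ∑ j ∈ Finset.univ.filter (fun j : Fin (m+1) => i < j),
              (s i.val j.val : ℚ) * ∑ t ∈ Finset.range k, (1 + (a t j : ℚ))
            = ∑ t ∈ Finset.range k, ((a (t+1) i : ℚ) - (a t i : ℚ)) := by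
          simp_rw [Finset.mul_sum]
          rw [Finset.sum_comm]
          refine Finset.sum_congr rfl fun t _ => ?_
          have hcast : ((a (t+1) i : ℚ)) = (a t i : ℚ) +
              ∑ j ∈ Finset.univ.filter (fun j : Fin (m+1) => i < j),
                (s i.val j.val : ℚ) * (1 + (a t j : ℚ)) := by
            rw [ha t i]
            push_cast
            rfl
          rw [hcast]
          ring
        rw [swap, Finset.sum_range_sub (fun t => (a t i : ℚ)), ha0]
        push_cast
        ring
      · refine Polynomial.natDegree_le_iff_coeff_eq_zero.2 fun N hN => ?_
        rw [Polynomial.coeff_add, Polynomial.finset_sum_coeff]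
        have h1 : (1 : Polynomial ℚ).coeff N = 0 := by
          rw [Polynomial.coeff_one, if_neg (by omega)]
        rw [h1, zero_add]
        refine Finset.sum_eq_zero fun j _ => ?_
        rw [Polynomial.coeff_C_mul, Polynomial.coeff_eq_zero_of_natDegree_lt, mul_zero]
        have hjv : i.val < j.1.val := hmemT j.1 j.2
        have hjm : j.1.val ≤ m := Nat.lt_succ_iff.1 j.1.isLt
        exact lt_of_le_of_lt (hA2 j.1 (hmemT j.1 j.2)) (by omega)
      · set j0 : Fin (m+1) := ⟨i.val + 1, by omega⟩ with hj0
        have hj0v : (j0 : ℕ) = i.val + 1 := rfl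
        have hij0 : i < j0 := by
          rw [Fin.lt_def, hj0v]
          exact Nat.lt_succ_self _
        have hj0T : j0 ∈ Finset.univ.filter (fun j : Fin (m+1) => i < j) :=
          Finset.mem_filter.2 ⟨Finset.mem_univ _, hij0⟩
        rw [Polynomial.coeff_add, Polynomial.finset_sum_coeff]
        have h1 : (1 : Polynomial ℚ).coeff (m - i.val) = 0 := by
          rw [Polynomial.coeff_one, if_neg (by omega)]
        rw [h1, zero_add]
        rw [Finset.sum_eq_single_of_mem
          (⟨j0, hj0T⟩ : {x // x ∈ Finset.univ.filter (fun j : Fin (m+1) => i < j)})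
          (Finset.mem_attach _ _)]
        · rw [Polynomial.coeff_C_mul]
          have hidx : m - i.val = (m - (j0 : ℕ)) + 1 := by rw [hj0v]; omega
          rw [hidx, hA3 j0 (hmemT j0 hj0T), hQ3 j0 (hmemT j0 hj0T), hj0v]
          rw [Finset.prod_eq_prod_Ico_succ_bot him (fun t => (s t (t+1) : ℚ))]
          rw [Nat.factorial_succ]
          have hne1 : ((m - (i.val+1) : ℕ) : ℚ) + 1 ≠ 0 := by positivity
          have hne2 : ((Nat.factorial (m - (i.val+1)) : ℕ) : ℚ) ≠ 0 := by
            exact_mod_cast Nat.factorial_ne_zero _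
          push_cast
          field_simp
        · rintro ⟨j, hjT⟩ _ hne
          have hjv : i.val < j.val := hmemT j hjT
          have hjm : j.val ≤ m := Nat.lt_succ_iff.1 j.isLt
          have hjne : j ≠ j0 := fun h => hne (Subtype.ext h)
          have hjgt : i.val + 1 < j.val := by
            rcases Nat.lt_or_ge (i.val + 1) j.val with h | h
            · exact h
            · exfalso
              apply hjne
              apply Fin.ext
              rw [hj0v]
              omega
          rw [Polynomial.coeff_C_mul, Polynomial.coeff_eq_zero_of_natDegree_lt, mul_zero]
          exact lt_of_le_of_lt (hA2 j (hmemT j hjT)) (by omega)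
  exact fun i => main (m - i.val) i le_rfl


end NW


/-- The degree recursion sequence. -/
def aseq (m : ℕ) (s : ℕ → ℕ → ℕ) : ℕ → Fin (m + 1) → ℕ
  | 0 => fun _ => 0
  | (k+1) => fun i => aseq m s k i +
      ∑ j ∈ Finset.univ.filter (fun j : Fin (m + 1) => i < j),
        s i.val j.val * (1 + aseq m s k j)

/-- The iterated decomposition pair. -/
noncomputable def mkGH {K : Type*} [CommRing K] (m : ℕ)
    (Fs : ℕ → Fin (m + 1) → MvPolynomial (Fin (m + 1)) K)
    (G H : ℕ → Fin (m + 1) → MvPolynomial (Fin (m + 1)) K) :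
    ℕ → Fin (m + 1) → MvPolynomial (Fin (m + 1)) K × MvPolynomial (Fin (m + 1)) K
  | 0 => fun _ => (1, 0)
  | (k+1) => fun i =>
      ((mkGH m Fs G H k i).1 * MvPolynomial.bind₁ (iterSys m Fs k) (G k i),
       (mkGH m Fs G H k i).2 * MvPolynomial.bind₁ (iterSys m Fs k) (G k i) +
         MvPolynomial.bind₁ (iterSys m Fs k) (H k i))

theorem stmt0 {K : Type*} [Field K] (m : ℕ) (hm : 1 ≤ m) (s : ℕ → ℕ → ℕ)
    (Fs : ℕ → Fin (m + 1) → MvPolynomial (Fin (m + 1)) K)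
    (hFs : ∀ k, 1 ≤ k → IsFSystem m s (Fs k)) :
    ∃ Gt Ht : ℕ → Fin (m + 1) → MvPolynomial (Fin (m + 1)) K,
      (∀ k, 1 ≤ k → ∀ i : Fin (m + 1),
        iterSys m Fs k i = MvPolynomial.X i * Gt k i + Ht k i ∧
        (∀ d ∈ (Gt k i).support, ∀ j : Fin (m + 1), j ≤ i → d j = 0) ∧
        (∀ d ∈ (Ht k i).support, ∀ j : Fin (m + 1), j ≤ i → d j = 0)) ∧
      (∀ k, 1 ≤ k → (Gt k (Fin.last m)).totalDegree = 0) ∧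
      (∀ i : Fin (m + 1), (i : ℕ) < m →
        ∃ ψ : Polynomial ℚ, ψ.degree < ((m - (i : ℕ) : ℕ) : WithBot ℕ) ∧
          ∀ k, 1 ≤ k →
            ((Gt k i).totalDegree : ℚ) =
              (k : ℚ) ^ (m - (i : ℕ)) *
                  (∏ j ∈ Finset.Ico (i : ℕ) m, (s j (j + 1) : ℚ)) /
                  (Nat.factorial (m - (i : ℕ)) : ℚ) +
                ψ.eval (k : ℚ))   := by
  classical
  have key : ∀ (k : ℕ) (i : Fin (m + 1)),
      ∃ (G H Gl : MvPolynomial (Fin (m + 1)) K) (g : K),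
        g ≠ 0 ∧
        Fs (k+1) i = MvPolynomial.X i * G + H ∧
        (∀ d ∈ G.support, ∀ j : Fin (m + 1), j ≤ i → d j = 0) ∧
        (∀ d ∈ H.support, ∀ j : Fin (m + 1), j ≤ i → d j = 0) ∧
        G = MvPolynomial.C g *
            (∏ j ∈ Finset.univ.filter (fun j : Fin (m + 1) => i < j),
              MvPolynomial.X j ^ s i.val j.val) + Gl ∧
        (∀ d ∈ Gl.support, ∀ j : Fin (m + 1), i < j → d j < s i.val j.val) ∧
        (∀ d ∈ H.support, ∀ j : Fin (m + 1), i < j → d j ≤ s i.val j.val) ∧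
        ((i : ℕ) = m → Gl = 0) := by
    intro k i
    by_cases hic : (i : ℕ) < m
    · obtain ⟨G, H, Gl, g, hg, h1, h2, h3, h4, h5, h6⟩ :=
        (hFs (k+1) (Nat.succ_le_succ (Nat.zero_le k))).2 i hic
      exact ⟨G, H, Gl, g, hg, h1, h2, h3, h4, h5, h6, fun h => absurd h (by omega)⟩
    · obtain ⟨g, h, hg, hF⟩ := (hFs (k+1) (Nat.succ_le_succ (Nat.zero_le k))).1
      have hieq : i = Fin.last m := Fin.ext (by
        have := i.isLt
        simp only [Fin.val_last]
        omega)
      have hTem : Finset.univ.filter (fun j : Fin (m+1) => i < j) = ∅ :=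
        Finset.filter_false_of_mem fun j _ => not_lt.2 (hieq ▸ Fin.le_last j)
      have hsuppC : ∀ (c : K), ∀ d ∈ (MvPolynomial.C c : MvPolynomial (Fin (m+1)) K).support,
          d = 0 := by
        intro c d hd
        by_contra hne
        rw [MvPolynomial.mem_support_iff, MvPolynomial.coeff_C, if_neg (fun h => hne h.symm)] at hd
        exact hd rfl
      refine ⟨MvPolynomial.C g, MvPolynomial.C h, 0, g, hg, ?_, ?_, ?_, ?_, ?_, ?_, fun _ => rfl⟩
      · rw [hieq, hF]; ring
      · intro d hd j _; rw [hsuppC g d hd]; rfl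
      · intro d hd j _; rw [hsuppC h d hd]; rfl
      · rw [hTem, Finset.prod_empty]; ring
      · intro d hd; simp at hd
      · intro d hd j _; rw [hsuppC h d hd]; exact Nat.zero_le _
  choose G Hh Gl g hg hFeq hGsupp hHsupp hGdec hGlb hHb hGl0 using key
  -- the main invariant
  have INV : ∀ k (i : Fin (m+1)),
      iterSys m Fs k i = MvPolynomial.X i * (mkGH m Fs G Hh k i).1 + (mkGH m Fs G Hh k i).2 ∧
      (∀ j ∈ (mkGH m Fs G Hh k i).1.vars, i < j) ∧
      (∀ j ∈ (mkGH m Fs G Hh k i).2.vars, i < j) ∧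
      (mkGH m Fs G Hh k i).1 ≠ 0 ∧
      (mkGH m Fs G Hh k i).1.totalDegree = aseq m s k i ∧
      (mkGH m Fs G Hh k i).2.totalDegree ≤ 1 + aseq m s k i := by
    intro k
    induction k with
    | zero =>
      intro i
      refine ⟨by show MvPolynomial.X i = MvPolynomial.X i * 1 + 0; ring,
        ?_, ?_, one_ne_zero, MvPolynomial.totalDegree_one, by
          show (0 : MvPolynomial (Fin (m+1)) K).totalDegree ≤ 1 + 0
          simp⟩
      · intro j hj
        have : (mkGH m Fs G Hh 0 i).1 = 1 := rfl
        rw [this] at hj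
        simp [MvPolynomial.vars_one] at hj
      · intro j hj
        have : (mkGH m Fs G Hh 0 i).2 = 0 := rfl
        rw [this] at hj
        simp [MvPolynomial.vars_0] at hj
    | succ k IH =>
      have hiter : ∀ j : Fin (m+1), iterSys m Fs k j ≠ 0 ∧
          (iterSys m Fs k j).totalDegree = 1 + aseq m s k j ∧
          (∀ i' : Fin (m+1), i' < j → ∀ l ∈ (iterSys m Fs k j).vars, i' < l) := by
        intro j
        obtain ⟨hIt, hV1, hV2, hne1, hdeg1, hdeg2⟩ := IH j
        have hsupp : ∀ d ∈ (mkGH m Fs G Hh k j).2.support, d j = 0 := by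
          intro d hd
          by_contra hdj
          exact lt_irrefl j (hV2 j ((MvPolynomial.mem_vars _).2
            ⟨d, hd, Finsupp.mem_support_iff.2 hdj⟩))
        have h := NW.deg_X_mul_add hne1 hsupp (by rw [hdeg1]; exact hdeg2)
        refine ⟨hIt ▸ h.1, by rw [hIt, h.2, hdeg1], ?_⟩
        intro i' hij l hl
        rw [hIt] at hl
        rcases Finset.mem_union.1 (MvPolynomial.vars_add_subset _ _ hl) with h' | h'
        · rcases Finset.mem_union.1 (MvPolynomial.vars_mul _ _ h') with h'' | h''
          · rw [MvPolynomial.vars_X] at h''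
            rw [Finset.mem_singleton.1 h'']
            exact hij
          · exact lt_trans hij (hV1 l h'')
        · exact lt_trans hij (hV2 l h')
      intro i
      obtain ⟨hIti, hV1i, hV2i, hne1i, hdeg1i, hdeg2i⟩ := IH i
      set T := Finset.univ.filter (fun j : Fin (m+1) => i < j) with hT
      set b := ∑ j ∈ T, s i.val j.val * (1 + aseq m s k j) with hb
      set f := iterSys m Fs k with hf
      have hbind : MvPolynomial.bind₁ f (G k i) =
          MvPolynomial.C (g k i) * (∏ j ∈ T, f j ^ s i.val j.val) +
            MvPolynomial.bind₁ f (Gl k i) := by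
        conv_lhs => rw [hGdec k i]
        simp only [map_add, map_mul, map_prod, map_pow, MvPolynomial.bind₁_X_right,
          MvPolynomial.algHom_C, MvPolynomial.algebraMap_eq]
        rfl
      have hA1 : (∏ j ∈ T, f j ^ s i.val j.val) ≠ 0 ∧
          (∏ j ∈ T, f j ^ s i.val j.val).totalDegree = b := by
        have h := NW.totalDegree_prod_pow T f (fun j => s i.val j.val) (fun j _ => (hiter j).1)
        refine ⟨h.1, ?_⟩
        rw [h.2, hb]
        exact Finset.sum_congr rfl fun j _ => by rw [(hiter j).2.1]
      have hCne : (MvPolynomial.C (g k i) : MvPolynomial (Fin (m+1)) K) ≠ 0 := by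
        simpa using hg k i
      have hCA1 : (MvPolynomial.C (g k i) * ∏ j ∈ T, f j ^ s i.val j.val) ≠ 0 ∧
          (MvPolynomial.C (g k i) * ∏ j ∈ T, f j ^ s i.val j.val).totalDegree = b := by
        refine ⟨mul_ne_zero hCne hA1.1, ?_⟩
        rw [NW.totalDegree_mul_eq hCne hA1.1, MvPolynomial.totalDegree_C, hA1.2, zero_add]
      have hGamma : MvPolynomial.bind₁ f (G k i) ≠ 0 ∧
          (MvPolynomial.bind₁ f (G k i)).totalDegree = b := by
        rw [hbind]
        by_cases hGlz : Gl k i = 0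
        · have h := NW.add_of_deg_lt (q := MvPolynomial.bind₁ f (Gl k i)) hCA1.1
            (Or.inr (by rw [hGlz, map_zero]))
          exact ⟨h.1, by rw [h.2, hCA1.2]⟩
        · have hi_lt : (i:ℕ) < m := by
            rcases Nat.lt_or_ge (i:ℕ) m with h | h
            · exact h
            · exact absurd (hGl0 k i (by have := i.isLt; omega)) hGlz
          have hlastT : Fin.last m ∈ T := by
            rw [hT]
            refine Finset.mem_filter.2 ⟨Finset.mem_univ _, ?_⟩
            rw [Fin.lt_def, Fin.val_last]
            exact hi_lt
          have hGlvars : ∀ l ∈ (Gl k i).vars, i < l := by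
            intro l hl
            have hsub : Gl k i = G k i - MvPolynomial.C (g k i) *
                ∏ j ∈ T, MvPolynomial.X j ^ s i.val j.val := by
              rw [hGdec k i]; ring
            rw [hsub] at hl
            rcases Finset.mem_union.1 (MvPolynomial.vars_sub_subset _ hl) with h' | h'
            · obtain ⟨d, hd, hld⟩ := (MvPolynomial.mem_vars _).1 h'
              by_contra hnl
              exact Finsupp.mem_support_iff.1 hld (hGsupp k i d hd l (not_lt.1 hnl))
            · rcases Finset.mem_union.1 (MvPolynomial.vars_mul _ _ h') with h'' | h''
              · rw [MvPolynomial.vars_C] at h''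
                exact absurd h'' (Finset.notMem_empty _)
              · obtain ⟨j, hjT, hlj⟩ := Finset.mem_biUnion.1 (MvPolynomial.vars_prod _ h'')
                have hXp := MvPolynomial.vars_pow (MvPolynomial.X j) (s i.val j.val) hlj
                rw [MvPolynomial.vars_X] at hXp
                rw [Finset.mem_singleton.1 hXp]
                exact (Finset.mem_filter.1 hjT).2
          have hspos : ∀ j ∈ T, 1 ≤ s i.val j.val := by
            intro j hjT
            obtain ⟨d, hd⟩ := MvPolynomial.ne_zero_iff.1 hGlz
            have := hGlb k i d (MvPolynomial.mem_support_iff.2 hd) j (Finset.mem_filter.1 hjT).2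
            omega
          have hB : (MvPolynomial.bind₁ f (Gl k i)).totalDegree ≤
              ∑ j ∈ T, (s i.val j.val - 1) * (1 + aseq m s k j) := by
            apply NW.bind_deg_le f (Gl k i) (fun j => 1 + aseq m s k j)
            · intro j
              exact le_of_eq (hiter j).2.1
            · intro d hd
              have hzero : ∀ j : Fin (m+1), j ∉ T → d j = 0 := by
                intro j hjT
                by_contra hdj
                exact hjT (Finset.mem_filter.2 ⟨Finset.mem_univ _,
                  hGlvars j ((MvPolynomial.mem_vars _).2
                    ⟨d, hd, Finsupp.mem_support_iff.2 hdj⟩)⟩)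
              rw [← Finset.sum_subset (Finset.subset_univ T)
                (fun x _ hx => by rw [hzero x hx, zero_mul])]
              refine Finset.sum_le_sum fun j hjT => ?_
              have hdlt := hGlb k i d hd j (Finset.mem_filter.1 hjT).2
              exact Nat.mul_le_mul_right _ (by omega)
          have hBlt : ∑ j ∈ T, (s i.val j.val - 1) * (1 + aseq m s k j) < b := by
            have hsum : ∀ j ∈ T, (s i.val j.val - 1) * (1 + aseq m s k j) + (1 + aseq m s k j)
                = s i.val j.val * (1 + aseq m s k j) := by
              intro j hjT
              obtain ⟨c, hc⟩ : ∃ c, s i.val j.val = c + 1 :=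
                ⟨s i.val j.val - 1, by have := hspos j hjT; omega⟩
              rw [hc]
              simp [Nat.add_sub_cancel]
              ring
            have h1le : 1 ≤ ∑ j ∈ T, (1 + aseq m s k j) :=
              le_trans (Nat.le_add_right 1 _)
                (Finset.single_le_sum (f := fun j => 1 + aseq m s k j)
                  (fun _ _ => Nat.zero_le _) hlastT)
            have heq : ∑ j ∈ T, (s i.val j.val - 1) * (1 + aseq m s k j)
                + ∑ j ∈ T, (1 + aseq m s k j) = b := by
              rw [hb, ← Finset.sum_add_distrib]
              exact Finset.sum_congr rfl hsum
            omega
          have h := NW.add_of_deg_lt (q := MvPolynomial.bind₁ f (Gl k i)) hCA1.1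
            (Or.inl (by
              rw [hCA1.2]
              exact lt_of_le_of_lt hB hBlt))
          exact ⟨h.1, by rw [h.2, hCA1.2]⟩
      have hGammaVars : ∀ l ∈ (MvPolynomial.bind₁ f (G k i)).vars, i < l := by
        intro l hl
        obtain ⟨t, ht, hl'⟩ := Finset.mem_biUnion.1 (MvPolynomial.vars_bind₁ f (G k i) hl)
        have hit : i < t := by
          obtain ⟨d, hd, htd⟩ := (MvPolynomial.mem_vars _).1 ht
          by_contra hnt
          exact Finsupp.mem_support_iff.1 htd (hGsupp k i d hd t (not_lt.1 hnt))
        exact (hiter t).2.2 i hit l hl'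
      have hHVars : ∀ l ∈ (MvPolynomial.bind₁ f (Hh k i)).vars, i < l := by
        intro l hl
        obtain ⟨t, ht, hl'⟩ := Finset.mem_biUnion.1 (MvPolynomial.vars_bind₁ f (Hh k i) hl)
        have hit : i < t := by
          obtain ⟨d, hd, htd⟩ := (MvPolynomial.mem_vars _).1 ht
          by_contra hnt
          exact Finsupp.mem_support_iff.1 htd (hHsupp k i d hd t (not_lt.1 hnt))
        exact (hiter t).2.2 i hit l hl'
      have hBindH : (MvPolynomial.bind₁ f (Hh k i)).totalDegree ≤ b := by
        apply NW.bind_deg_le f (Hh k i) (fun j => 1 + aseq m s k j)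
        · intro j
          exact le_of_eq (hiter j).2.1
        · intro d hd
          have hzero : ∀ j : Fin (m+1), j ∉ T → d j = 0 := by
            intro j hjT
            have hnij : ¬ i < j := fun h => hjT (Finset.mem_filter.2 ⟨Finset.mem_univ _, h⟩)
            exact hHsupp k i d hd j (not_lt.1 hnij)
          rw [← Finset.sum_subset (Finset.subset_univ T)
            (fun x _ hx => by rw [hzero x hx, zero_mul])]
          rw [hb]
          exact Finset.sum_le_sum fun j hjT =>
            Nat.mul_le_mul_right _ (hHb k i d hd j (Finset.mem_filter.1 hjT).2)
      have hmk1 : (mkGH m Fs G Hh (k+1) i).1 =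
          (mkGH m Fs G Hh k i).1 * MvPolynomial.bind₁ f (G k i) := rfl
      have hmk2 : (mkGH m Fs G Hh (k+1) i).2 =
          (mkGH m Fs G Hh k i).2 * MvPolynomial.bind₁ f (G k i) +
            MvPolynomial.bind₁ f (Hh k i) := rfl
      have hstep : aseq m s (k+1) i = aseq m s k i + b := rfl
      refine ⟨?_, ?_, ?_, ?_, ?_, ?_⟩
      · have hdef : iterSys m Fs (k+1) i = MvPolynomial.bind₁ f (Fs (k+1) i) := rfl
        rw [hdef, hFeq k i, map_add, map_mul, MvPolynomial.bind₁_X_right, hmk1, hmk2]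
        rw [show f i = MvPolynomial.X i * (mkGH m Fs G Hh k i).1 + (mkGH m Fs G Hh k i).2
          from hIti]
        ring
      · intro l hl
        rw [hmk1] at hl
        rcases Finset.mem_union.1 (MvPolynomial.vars_mul _ _ hl) with h | h
        · exact hV1i l h
        · exact hGammaVars l h
      · intro l hl
        rw [hmk2] at hl
        rcases Finset.mem_union.1 (MvPolynomial.vars_add_subset _ _ hl) with h | h
        · rcases Finset.mem_union.1 (MvPolynomial.vars_mul _ _ h) with h' | h'
          · exact hV2i l h'
          · exact hGammaVars l h'
        · exact hHVars l h
      · rw [hmk1]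
        exact mul_ne_zero hne1i hGamma.1
      · rw [hmk1, NW.totalDegree_mul_eq hne1i hGamma.1, hdeg1i, hGamma.2, hstep]
      · rw [hmk2, hstep]
        refine le_trans (MvPolynomial.totalDegree_add _ _) (max_le ?_ ?_)
        · refine le_trans (MvPolynomial.totalDegree_mul _ _) ?_
          have h2 := hGamma.2
          omega
        · omega
  have halast : ∀ k, aseq m s k (Fin.last m) = 0 := by
    intro k
    induction k with
    | zero => rfl
    | succ k ih =>
      have hemp : Finset.univ.filter (fun j : Fin (m+1) => Fin.last m < j) = ∅ :=
        Finset.filter_false_of_mem fun j _ => not_lt.2 (Fin.le_last j)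
      show aseq m s k (Fin.last m) + _ = 0
      rw [ih, hemp, Finset.sum_empty]
      rfl
  refine ⟨fun k i => (mkGH m Fs G Hh k i).1, fun k i => (mkGH m Fs G Hh k i).2, ?_, ?_, ?_⟩
  · intro k _ i
    obtain ⟨h1, h2, h3, _, _, _⟩ := INV k i
    refine ⟨h1, ?_, ?_⟩
    · intro d hd j hji
      by_contra hdj
      exact absurd (h2 j ((MvPolynomial.mem_vars _).2
        ⟨d, hd, Finsupp.mem_support_iff.2 hdj⟩)) (not_lt.2 hji)
    · intro d hd j hji
      by_contra hdj
      exact absurd (h3 j ((MvPolynomial.mem_vars _).2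
        ⟨d, hd, Finsupp.mem_support_iff.2 hdj⟩)) (not_lt.2 hji)
  · intro k _
    obtain ⟨_, _, _, _, hdeg, _⟩ := INV k (Fin.last m)
    rw [hdeg, halast k]
  · intro i hi
    obtain ⟨Q, hQe, hQd, hQc⟩ := NW.existsQ m s (aseq m s) (fun _ => rfl) (fun _ _ => rfl) i
    set c : ℚ := (∏ t ∈ Finset.Ico (i:ℕ) m, (s t (t+1) : ℚ)) /
      (Nat.factorial (m - (i:ℕ))) with hc
    refine ⟨Q - Polynomial.C c * Polynomial.X ^ (m - (i:ℕ)) - 1, ?_, ?_⟩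
    · rw [Polynomial.degree_lt_iff_coeff_zero]
      intro N hN
      rw [Polynomial.coeff_sub, Polynomial.coeff_sub, Polynomial.coeff_C_mul,
        Polynomial.coeff_X_pow, Polynomial.coeff_one]
      rcases eq_or_lt_of_le hN with hNe | hNl
      · subst hNe
        rw [if_pos rfl, if_neg (by omega), hQc, hc]
        ring
      · rw [if_neg (by omega), if_neg (by omega),
          Polynomial.coeff_eq_zero_of_natDegree_lt (lt_of_le_of_lt hQd hNl)]
        ring
    · intro k _
      obtain ⟨_, _, _, _, hdeg, _⟩ := INV k i
      rw [hdeg]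
      rw [Polynomial.eval_sub, Polynomial.eval_sub, Polynomial.eval_mul, Polynomial.eval_C,
        Polynomial.eval_pow, Polynomial.eval_X, Polynomial.eval_one, hQe k, hc]
      have hfne : (Nat.factorial (m - (i:ℕ)) : ℚ) ≠ 0 := by
        exact_mod_cast Nat.factorial_ne_zero _
      field_simp
      ring
end

section
/- Let F be a field, m ≥ 1 an integer, S an upper triangular matrix as below, and F_k ∈ 𝔉(S,m), k = 1,2,…, a sequence of polynomial systems with iterated polynomials F_i^{(k)} = X_i·G̃_{k,i} + H̃_{k,i} where G̃_{k,i}, H̃_{k,i} ∈ F[X_{i+1},…,X_m]. Set d_{k,i} = 1 + deg G̃_{k,i} for i = 0,…,m. Then for every k ≥ 1 the column vector (d_{k,0},…,d_{k,m})^T equals S^k·(1,…,1)^T. -/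
/-!
By induction on `k`, each `F_i^{(k)}` has the form `X_i * A + B` with `A ≠ 0`, with `A` and `B`
polynomials in the variables `X_j`, `j > i`, and with `deg B ≤ 1 + deg A = d_{k,i}`; such a
decomposition is unique, so `A = G̃_{k,i}`. Substituting into `F_{k+1,i} = X_i G_i + H_i` gives
`F_i^{(k+1)} = X_i (A_i G_i(F^{(k)})) + (B_i G_i(F^{(k)}) + H_i(F^{(k)}))`. Since every
`d_{k,j} ≥ 1`, the leading monomial of `G_i` becomes a polynomial of degree exactly
`∑_{j>i} s_{i,j} d_{k,j}` (we are in a domain), while every other monomial of `G_i` becomes one of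
strictly smaller degree and every monomial of `H_i` one of at most that degree. Hence
`d_{k+1,i} = d_{k,i} + ∑_{j>i} s_{i,j} d_{k,j} = (S d_k)_i`.
-/

open MvPolynomial

/-- The matrix `S` associated with the data `s i j`. -/
def Smat (m : ℕ) (s : ℕ → ℕ → ℕ) : Matrix (Fin (m + 1)) (Fin (m + 1)) ℕ :=
  fun i j => if i = j then 1 else if i < j then s i.val j.val else 0

namespace Finsupp

variable {σ : Type*}

theorem weight_mono (w : σ → ℕ) : Monotone (weight w : (σ →₀ ℕ) → ℕ) := by
  intro d e h
  obtain ⟨c, rfl⟩ := exists_add_of_le h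
  rw [map_add]
  exact Nat.le_add_right _ _

theorem weight_strictMono {w : σ → ℕ} (hw : ∀ j, w j ≠ 0) :
    StrictMono (weight w : (σ →₀ ℕ) → ℕ) := by
  intro d e h
  obtain ⟨c, rfl⟩ := exists_add_of_le h.le
  obtain ⟨j, hj⟩ : ∃ j, c j ≠ 0 := by
    by_contra! hc
    exact h.ne (by rw [show c = 0 from Finsupp.ext hc, add_zero])
  rw [map_add]
  have := le_weight_of_ne_zero' w hj
  have := hw j
  omega

end Finsupp

namespace MvPolynomial

variable {σ τ R : Type*}

section CommSemiring

variable [CommSemiring R]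

theorem mem_supported_iff_apply_eq_zero {p : MvPolynomial σ R} {s : Set σ} :
    p ∈ supported R s ↔ ∀ d ∈ p.support, ∀ j ∉ s, d j = 0 := by
  simp only [mem_supported, Set.subset_def, Finset.mem_coe, mem_vars_iff_mem_support,
    Finsupp.mem_support_iff]
  exact ⟨fun h d hd j hj => by_contra fun hdj => hj (h j ⟨d, hd, hdj⟩),
    fun h j ⟨d, hd, hdj⟩ => by_contra fun hj => hdj (h d hd j hj)⟩

theorem mem_supported_of_forall_le {p : MvPolynomial σ R} {e : σ →₀ ℕ} {s : Set σ}
    (hp : ∀ d ∈ p.support, d ≤ e) (he : ↑e.support ⊆ s) : p ∈ supported R s :=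
  mem_supported_iff_apply_eq_zero.mpr fun d hd j hj =>
    Nat.eq_zero_of_le_zero <| (hp d hd j).trans_eq <|
      Finsupp.notMem_support_iff.mp fun hje => hj (he hje)

theorem coeff_eq_zero_of_mem_supported {p : MvPolynomial σ R} {s : Set σ}
    (hp : p ∈ supported R s) {d : σ →₀ ℕ} {j : σ} (hj : j ∉ s) (hd : d j ≠ 0) :
    coeff d p = 0 :=
  notMem_support_iff.mp fun hdp => hd (mem_supported_iff_apply_eq_zero.mp hp d hdp j hj)

theorem bind₁_mem_supported {f : σ → MvPolynomial τ R} {p : MvPolynomial σ R} {s : Set σ}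
    {t : Set τ} (hp : p ∈ supported R s) (hf : ∀ j ∈ s, f j ∈ supported R t) :
    bind₁ f p ∈ supported R t := by
  rw [mem_supported] at hp ⊢
  intro l hl
  obtain ⟨j, hj, hlj⟩ := mem_vars_bind₁ f p hl
  exact mem_supported.mp (hf j (hp hj)) hlj

theorem totalDegree_bind₁_le (f : σ → MvPolynomial τ R) {p : MvPolynomial σ R} {N : ℕ}
    (hp : ∀ d ∈ p.support, Finsupp.weight (fun j => (f j).totalDegree) d ≤ N) :
    (bind₁ f p).totalDegree ≤ N := by
  conv_lhs => rw [p.as_sum, map_sum]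
  refine (totalDegree_finsetSum _ _).trans (Finset.sup_le fun d hd => ?_)
  rw [bind₁_monomial]
  refine (totalDegree_mul _ _).trans ?_
  rw [totalDegree_C, zero_add]
  refine (totalDegree_finsetProd _ _).trans (le_trans ?_ (hp d hd))
  rw [Finsupp.weight_apply, Finsupp.sum]
  exact Finset.sum_le_sum fun j _ => (totalDegree_pow _ _).trans_eq (smul_eq_mul _ _).symm

theorem mem_supported_Ioi_iff [LinearOrder σ] {p : MvPolynomial σ R} {i : σ} :
    p ∈ supported R (Set.Ioi i) ↔ ∀ d ∈ p.support, ∀ j ≤ i, d j = 0 := by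
  simp only [mem_supported_iff_apply_eq_zero, Set.mem_Ioi, not_lt]

end CommSemiring

section CommRing

variable [CommRing R]

theorem eq_of_X_mul_add_eq {s : Set σ} {i : σ} (hi : i ∉ s) {A B A' B' : MvPolynomial σ R}
    (hB : B ∈ supported R s) (hB' : B' ∈ supported R s)
    (h : X i * A + B = X i * A' + B') : A = A' ∧ B = B' := by
  have hAA' : A = A' := by
    ext d
    have hshift : (Finsupp.single i 1 + d : σ →₀ ℕ) i ≠ 0 := by simp
    have := congrArg (coeff (Finsupp.single i 1 + d)) h
    rwa [coeff_add, coeff_add, coeff_X_mul, coeff_X_mul,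
      coeff_eq_zero_of_mem_supported hB hi hshift, coeff_eq_zero_of_mem_supported hB' hi hshift,
      add_zero, add_zero] at this
  subst hAA'
  exact ⟨rfl, add_left_cancel h⟩

variable [IsDomain R]

theorem totalDegree_finsetProd_of_isDomain {ι : Type*} (t : Finset ι)
    {f : ι → MvPolynomial σ R} (hf : ∀ i ∈ t, f i ≠ 0) :
    (∏ i ∈ t, f i).totalDegree = ∑ i ∈ t, (f i).totalDegree := by
  classical
  induction t using Finset.induction with
  | empty => simp
  | insert a t ha ih =>
    rw [Finset.prod_insert ha, Finset.sum_insert ha,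
      totalDegree_mul_of_isDomain (hf a (t.mem_insert_self a))
        (Finset.prod_ne_zero_iff.mpr fun i hi => hf i (Finset.mem_insert_of_mem hi)),
      ih fun i hi => hf i (Finset.mem_insert_of_mem hi)]

theorem totalDegree_pow_of_isDomain {p : MvPolynomial σ R} (hp : p ≠ 0) (n : ℕ) :
    (p ^ n).totalDegree = n * p.totalDegree := by
  induction n with
  | zero => simp
  | succ n ih => rw [pow_succ, totalDegree_mul_of_isDomain (pow_ne_zero n hp) hp, ih, Nat.succ_mul]

theorem totalDegree_bind₁_monomial {f : σ → MvPolynomial τ R} (hf : ∀ j, f j ≠ 0)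
    (e : σ →₀ ℕ) {g : R} (hg : g ≠ 0) :
    (bind₁ f (monomial e g)).totalDegree = Finsupp.weight (fun j => (f j).totalDegree) e ∧
      bind₁ f (monomial e g) ≠ 0 := by
  have hC : (C g : MvPolynomial τ R) ≠ 0 := C_ne_zero.mpr hg
  have hprod : ∏ j ∈ e.support, f j ^ e j ≠ 0 :=
    Finset.prod_ne_zero_iff.mpr fun j _ => pow_ne_zero _ (hf j)
  rw [bind₁_monomial]
  refine ⟨?_, mul_ne_zero hC hprod⟩
  rw [totalDegree_mul_of_isDomain hC hprod, totalDegree_C, zero_add,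
    totalDegree_finsetProd_of_isDomain _ fun j _ => pow_ne_zero _ (hf j), Finsupp.weight_apply,
    Finsupp.sum]
  exact Finset.sum_congr rfl fun j _ => totalDegree_pow_of_isDomain (hf j) _

theorem totalDegree_bind₁_monomial_add {f : σ → MvPolynomial τ R}
    (hf : ∀ j, (f j).totalDegree ≠ 0) {e : σ →₀ ℕ} {g : R} (hg : g ≠ 0)
    {q : MvPolynomial σ R} (hq : ∀ d ∈ q.support, d < e) :
    (bind₁ f (monomial e g + q)).totalDegree = Finsupp.weight (fun j => (f j).totalDegree) e ∧
      bind₁ f (monomial e g + q) ≠ 0 := by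
  obtain ⟨hPdeg, hP⟩ :=
    totalDegree_bind₁_monomial (f := f) (fun j hj => hf j (hj ▸ totalDegree_zero)) e hg
  set w := fun j => (f j).totalDegree
  rw [map_add]
  rcases q.support.eq_empty_or_nonempty with hq0 | ⟨d, hd⟩
  · rw [support_eq_empty.mp hq0, map_zero, add_zero]
    exact ⟨hPdeg, hP⟩
  have hlt : ∀ d ∈ q.support, Finsupp.weight w d < Finsupp.weight w e :=
    fun d hd => Finsupp.weight_strictMono hf (hq d hd)
  have hQ : (bind₁ f q).totalDegree < (bind₁ f (monomial e g)).totalDegree := by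
    have := hlt d hd
    rw [hPdeg]
    exact (totalDegree_bind₁_le f fun d hd => Nat.le_sub_one_of_lt (hlt d hd)).trans_lt
      (by omega)
  refine ⟨(totalDegree_add_eq_left_of_totalDegree_lt hQ).trans hPdeg, fun h => ?_⟩
  rw [add_eq_zero_iff_eq_neg] at h
  have := congrArg totalDegree h
  rw [totalDegree_neg] at this
  omega

theorem totalDegree_X_mul_add {s : Set σ} {i : σ} (hi : i ∉ s) {A B : MvPolynomial σ R}
    (hA : A ≠ 0) (hB : B ∈ supported R s) (hBA : B.totalDegree ≤ 1 + A.totalDegree) :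
    (X i * A + B).totalDegree = 1 + A.totalDegree := by
  refine le_antisymm ((totalDegree_add _ _).trans (max_le ?_ hBA)) ?_
  · exact (totalDegree_mul _ _).trans (by rw [totalDegree_X])
  obtain ⟨d, hd, hdeg⟩ := Finset.exists_mem_eq_sup _ (support_nonempty.mpr hA)
    fun d : σ →₀ ℕ => d.sum fun _ n => n
  have hcoeff : coeff (Finsupp.single i 1 + d) (X i * A + B) ≠ 0 := by
    rw [coeff_add, coeff_X_mul, coeff_eq_zero_of_mem_supported hB hi (by simp), add_zero]
    exact mem_support_iff.mp hd
  have hsum : ((Finsupp.single i 1 + d).sum fun _ n => n) = 1 + A.totalDegree := by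
    rw [Finsupp.sum_add_index' (fun _ => rfl) fun _ _ _ => rfl, Finsupp.sum_single_index rfl,
      totalDegree, hdeg]
  exact hsum ▸ le_totalDegree (mem_support_iff.mpr hcoeff)

variable [Preorder σ]

/-- The shape of the iterates `F^{(k)}`, with `D j` in the role of `d_{k,j}`. -/
def IsTriangular (D : σ → ℕ) (f : σ → MvPolynomial σ R) : Prop :=
  ∀ j, ∃ A B : MvPolynomial σ R, f j = X j * A + B ∧ A ∈ supported R (Set.Ioi j) ∧
    B ∈ supported R (Set.Ioi j) ∧ A ≠ 0 ∧ 1 + A.totalDegree = D j ∧ B.totalDegree ≤ D j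

/-- The class `𝔉(S, m)` over any ordered set of variables: `e i` is the exponent of the leading
monomial of `G_i`. -/
def IsTriangularSystem (e : σ → σ →₀ ℕ) (F : σ → MvPolynomial σ R) : Prop :=
  (∀ i, ↑(e i).support ⊆ Set.Ioi i) ∧
  ∀ i, ∃ (g : R) (Gt H : MvPolynomial σ R), g ≠ 0 ∧
    F i = X i * (monomial (e i) g + Gt) + H ∧
    (∀ d ∈ Gt.support, d < e i) ∧ ∀ d ∈ H.support, d ≤ e i

theorem isTriangular_X : IsTriangular (fun _ => 1) (X : σ → MvPolynomial σ R) := fun j =>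
  ⟨1, 0, by rw [mul_one, add_zero], one_mem _, zero_mem _, one_ne_zero, by simp, by simp⟩

namespace IsTriangular

variable {D : σ → ℕ} {f : σ → MvPolynomial σ R}

theorem totalDegree_eq (hf : IsTriangular D f) (j : σ) : (f j).totalDegree = D j := by
  obtain ⟨A, B, hfj, -, hB, hA0, hAdeg, hBdeg⟩ := hf j
  rw [hfj, totalDegree_X_mul_add Set.self_notMem_Ioi hA0 hB (hAdeg ▸ hBdeg), hAdeg]

theorem totalDegree_ne_zero (hf : IsTriangular D f) (j : σ) : (f j).totalDegree ≠ 0 := by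
  obtain ⟨A, -, -, -, -, -, hAdeg, -⟩ := hf j
  rw [hf.totalDegree_eq, ← hAdeg]
  omega

theorem mem_supported_Ioi (hf : IsTriangular D f) {i j : σ} (hij : i < j) :
    f j ∈ supported R (Set.Ioi i) := by
  obtain ⟨A, B, hfj, hA, hB, -⟩ := hf j
  have hmono := supported_mono (R := R) (Set.Ioi_subset_Ioi hij.le)
  rw [hfj]
  exact add_mem (mul_mem (X_mem_supported.mpr hij) (hmono hA)) (hmono hB)

theorem bind₁ (hf : IsTriangular D f) {e : σ → σ →₀ ℕ} {F : σ → MvPolynomial σ R}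
    (hF : IsTriangularSystem e F) :
    IsTriangular (fun i => D i + Finsupp.weight D (e i)) (fun i => bind₁ f (F i)) := by
  classical
  intro i
  beta_reduce
  obtain ⟨g, Gt, H, hg, hFi, hGt, hH⟩ := hF.2 i
  obtain ⟨A, B, hfi, hA, hB, hA0, hAdeg, hBdeg⟩ := hf i
  have hw : (fun j => (f j).totalDegree) = D := _root_.funext hf.totalDegree_eq
  have hsupp : ∀ p : MvPolynomial σ R, (∀ d ∈ p.support, d ≤ e i) →
      MvPolynomial.bind₁ f p ∈ supported R (Set.Ioi i) := fun p hp =>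
    bind₁_mem_supported (mem_supported_of_forall_le hp (hF.1 i))
      fun j hj => hf.mem_supported_Ioi hj
  set G := monomial (e i) g + Gt
  have hGf : MvPolynomial.bind₁ f G ∈ supported R (Set.Ioi i) := by
    refine hsupp G fun d hd => ?_
    rcases Finset.mem_union.mp (support_add hd) with hd | hd
    · exact (Finset.mem_singleton.mp (support_monomial_subset hd)).le
    · exact (hGt d hd).le
  obtain ⟨hGdeg, hG0⟩ := totalDegree_bind₁_monomial_add hf.totalDegree_ne_zero hg hGt
  rw [hw] at hGdeg
  have hHf : MvPolynomial.bind₁ f H ∈ supported R (Set.Ioi i) := hsupp H hH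
  have hHdeg : (MvPolynomial.bind₁ f H).totalDegree ≤ Finsupp.weight D (e i) :=
    totalDegree_bind₁_le f fun d hd => hw ▸ Finsupp.weight_mono _ (hH d hd)
  refine ⟨A * MvPolynomial.bind₁ f G, B * MvPolynomial.bind₁ f G + MvPolynomial.bind₁ f H,
    ?_, mul_mem hA hGf, add_mem (mul_mem hB hGf) hHf, mul_ne_zero hA0 hG0, ?_, ?_⟩
  · rw [hFi, map_add, map_mul, bind₁_X_right, hfi]
    ring
  · rw [totalDegree_mul_of_isDomain hA0 hG0, hGdeg, ← hAdeg, add_assoc]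
  · refine (totalDegree_add _ _).trans (max_le ((totalDegree_mul _ _).trans ?_) ?_)
    · rw [hGdeg]
      omega
    · exact hHdeg.trans (Nat.le_add_left _ _)

end IsTriangular

end CommRing

end MvPolynomial

open Matrix

noncomputable def leadExp (m : ℕ) (s : ℕ → ℕ → ℕ) (i : Fin (m + 1)) :
    Fin (m + 1) →₀ ℕ :=
  Finsupp.equivFunOnFinite.symm fun j => if i < j then s i j else 0

section leadExp

variable {m : ℕ} {s : ℕ → ℕ → ℕ}

theorem leadExp_apply (i j : Fin (m + 1)) : leadExp m s i j = if i < j then s i j else 0 := rfl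

theorem leadExp_support_subset (i : Fin (m + 1)) : ↑(leadExp m s i).support ⊆ Set.Ioi i := by
  intro j hj
  by_contra hij
  exact Finsupp.mem_support_iff.mp hj (by rw [leadExp_apply, if_neg (show ¬i < j from hij)])

theorem le_leadExp {i : Fin (m + 1)} {d : Fin (m + 1) →₀ ℕ}
    (hlt : ∀ j, i < j → d j ≤ s i j) (hle : ∀ j, j ≤ i → d j = 0) :
    d ≤ leadExp m s i := by
  intro j
  rw [leadExp_apply]
  split_ifs with hij
  exacts [hlt j hij, (hle j (not_lt.mp hij)).le]

theorem leadExp_last : leadExp m s (Fin.last m) = 0 := by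
  ext j
  simp [leadExp_apply, (Fin.le_last j).not_gt]

theorem monomial_leadExp {R : Type*} [CommSemiring R] (i : Fin (m + 1)) (g : R) :
    monomial (leadExp m s i) g =
      C g * ∏ j ∈ Finset.univ.filter (fun j : Fin (m + 1) => i < j), X j ^ s i j := by
  rw [monomial_eq, Finsupp.prod_fintype _ _ fun _ => pow_zero _, Finset.prod_filter]
  simp only [leadExp_apply, pow_ite, pow_zero]

theorem Smat_mulVec_apply (v : Fin (m + 1) → ℕ) (i : Fin (m + 1)) :
    (Smat m s *ᵥ v) i = v i + Finsupp.weight v (leadExp m s i) := by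
  have hrow : ∀ j, Smat m s i j = (if i = j then 1 else 0) + leadExp m s i j := by
    intro j
    rcases lt_trichotomy i j with h | rfl | h
    · simp [Smat, leadExp_apply, h, h.ne]
    · simp [Smat, leadExp_apply]
    · simp [Smat, leadExp_apply, h.ne', h.not_gt]
  simp only [mulVec, dotProduct, hrow, add_mul, Finset.sum_add_distrib, ite_mul, one_mul,
    zero_mul, Finset.sum_ite_eq, Finset.mem_univ, if_true, Finsupp.weight_eq_sum, smul_eq_mul]

end leadExp

theorem IsFSystem.isTriangularSystem {K : Type*} [Field K] {m : ℕ} {s : ℕ → ℕ → ℕ}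
    {F : Fin (m + 1) → MvPolynomial (Fin (m + 1)) K} (hF : IsFSystem m s F) :
    IsTriangularSystem (leadExp m s) F := by
  refine ⟨leadExp_support_subset, fun i => ?_⟩
  rcases (Fin.le_last i).eq_or_lt with rfl | hi
  · obtain ⟨g, h, hg, hlast⟩ := hF.1
    refine ⟨g, 0, C h, hg, ?_, by simp, fun d hd => ?_⟩
    · rw [hlast, leadExp_last, add_zero, monomial_zero', mul_comm]
    · rw [mem_support_iff, coeff_C] at hd
      have hd0 : 0 = d := by_contra fun h0 => hd (if_neg h0)
      rw [leadExp_last, ← hd0]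
  obtain ⟨G, H, Gt, g, hg, hFi, hGsupp, hHsupp, hGeq, hGtb, hHb⟩ := hF.2 i hi
  rw [← monomial_leadExp] at hGeq
  have hGt : Gt ∈ supported K (Set.Ioi i) := by
    rw [show Gt = G - monomial (leadExp m s i) g by rw [hGeq]; ring]
    exact sub_mem (mem_supported_Ioi_iff.mpr hGsupp) (mem_supported_of_forall_le
      (fun d hd => (Finset.mem_singleton.mp (support_monomial_subset hd)).le)
      (leadExp_support_subset i))
  refine ⟨g, Gt, H, hg, by rw [hFi, hGeq], fun d hd => ?_, fun d hd =>
    le_leadExp (hHb d hd) (hHsupp d hd)⟩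
  refine lt_of_le_of_ne (le_leadExp (fun j hj => (hGtb d hd j hj).le)
    (mem_supported_Ioi_iff.mp hGt d hd)) fun hde => ?_
  exact (hGtb d hd (Fin.last m) hi).ne (by rw [hde, leadExp_apply, if_pos hi])

theorem isTriangular_iterSys {K : Type*} [Field K] {m : ℕ} {s : ℕ → ℕ → ℕ}
    {Fs : ℕ → Fin (m + 1) → MvPolynomial (Fin (m + 1)) K}
    (hFs : ∀ k, 1 ≤ k → IsFSystem m s (Fs k)) (k : ℕ) :
    IsTriangular ((Smat m s ^ k) *ᵥ fun _ => 1) (iterSys m Fs k) := by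
  induction k with
  | zero =>
    rw [pow_zero, one_mulVec]
    exact isTriangular_X
  | succ k ih =>
    set D := Smat m s ^ k *ᵥ fun _ => 1
    have hD : (Smat m s ^ (k + 1) *ᵥ fun _ => 1) = fun i =>
        D i + Finsupp.weight D (leadExp m s i) := by
      ext i
      rw [pow_succ', ← mulVec_mulVec, Smat_mulVec_apply]
    rw [hD]
    exact ih.bind₁ (hFs (k + 1) k.succ_pos).isTriangularSystem

theorem stmt1_general {K : Type*} [Field K] (m : ℕ) (s : ℕ → ℕ → ℕ)
    (Fs : ℕ → Fin (m + 1) → MvPolynomial (Fin (m + 1)) K)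
    (hFs : ∀ k, 1 ≤ k → IsFSystem m s (Fs k))
    (Gt Ht : ℕ → Fin (m + 1) → MvPolynomial (Fin (m + 1)) K)
    (hdec : ∀ k, 1 ≤ k → ∀ i : Fin (m + 1),
      iterSys m Fs k i = MvPolynomial.X i * Gt k i + Ht k i ∧
      (∀ d ∈ (Gt k i).support, ∀ j : Fin (m + 1), j ≤ i → d j = 0) ∧
      (∀ d ∈ (Ht k i).support, ∀ j : Fin (m + 1), j ≤ i → d j = 0)) :
    ∀ k, 1 ≤ k → ∀ i : Fin (m + 1),
      1 + (Gt k i).totalDegree = ((Smat m s) ^ k).mulVec (fun _ => 1) i := by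
  intro k hk i
  obtain ⟨A, B, hAB, -, hB, -, hAdeg, -⟩ := isTriangular_iterSys hFs k i
  obtain ⟨hGtHt, -, hHt⟩ := hdec k hk i
  obtain ⟨hGtA, -⟩ := eq_of_X_mul_add_eq Set.self_notMem_Ioi (mem_supported_Ioi_iff.mpr hHt) hB
    (hGtHt.symm.trans hAB)
  rw [hGtA, hAdeg]

theorem stmt1 {K : Type*} [Field K] (m : ℕ) (hm : 1 ≤ m) (s : ℕ → ℕ → ℕ)
    (Fs : ℕ → Fin (m + 1) → MvPolynomial (Fin (m + 1)) K)
    (hFs : ∀ k, 1 ≤ k → IsFSystem m s (Fs k))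
    (Gt Ht : ℕ → Fin (m + 1) → MvPolynomial (Fin (m + 1)) K)
    (hdec : ∀ k, 1 ≤ k → ∀ i : Fin (m + 1),
      iterSys m Fs k i = MvPolynomial.X i * Gt k i + Ht k i ∧
      (∀ d ∈ (Gt k i).support, ∀ j : Fin (m + 1), j ≤ i → d j = 0) ∧
      (∀ d ∈ (Ht k i).support, ∀ j : Fin (m + 1), j ≤ i → d j = 0)) :
    ∀ k, 1 ≤ k → ∀ i : Fin (m + 1),
      1 + (Gt k i).totalDegree = ((Smat m s) ^ k).mulVec (fun _ => 1) i :=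
  stmt1_general m s Fs hFs Gt Ht hdec
end
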